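/- Let P be the poset P = ℕ ∪ {a_n : n ∈ ℕ} ∪ {β, ω, a} ordered by: the usual order on ℕ; n ≤ ω for all n ∈ ℕ; a ≤ β and a ≤ a_n for all n; n ≤ a_m whenever n ≤ m in ℕ; and n ≤ β, ω ≤ β for all n ∈ ℕ. Then P is a dcpo, i.e., every directed subset of P has a supremum. -/
import Mathlib


/-- The poset `P = ℕ ∪ {aₙ : n ∈ ℕ} ∪ {β, ω, a}` from Example 3.3 (Fig. 2),
with `ℕ = {1, 2, 3, ...}` represented here by `ℕ`. -/
inductive Pel where
  | nat (n : ℕ)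
  | an (n : ℕ)
  | beta
  | omega
  | a
deriving DecidableEq

namespace Pel

/-- The order on `P`: the usual order on ℕ; `n ≤ ω`; `a ≤ β` and `a ≤ aₙ`;
`n ≤ a_m` whenever `n ≤ m`; `n ≤ β` and `ω ≤ β`. -/
def le : Pel → Pel → Prop
  | nat m, nat n => m ≤ n
  | nat _, omega => True
  | nat m, an n => m ≤ n
  | nat _, beta => True
  | omega, omega => True
  | omega, beta => True
  | a, a => True
  | a, beta => True
  | a, an _ => True
  | beta, beta => True
  | an m, an n => m = n
  | _, _ => False

instance : PartialOrder Pel where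
  le := le
  le_refl x := by cases x <;> simp [le]
  le_trans x y z hxy hyz := by
    cases x <;> cases y <;> cases z <;> simp_all [le] <;> omega
  le_antisymm x y hxy hyx := by
    cases x <;> cases y <;> simp_all [le] <;> omega
/-- `P` is a dcpo: every directed subset of `P` has a supremum. -/
theorem pel_dcpo (D : Set Pel) (hne : D.Nonempty)
    (hdir : DirectedOn (· ≤ ·) D) : ∃ s : Pel, IsLUB D s := by
  by_cases hb : beta ∈ D
  · refine ⟨beta, fun x hx => ?_, fun u hu => hu hb⟩
    obtain ⟨z, hz, hxz, hbz⟩ := hdir x hx beta hb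
    cases z with
    | beta => exact hxz
    | nat n => exact absurd hbz (by simp [LE.le, le])
    | omega => exact absurd hbz (by simp [LE.le, le])
    | a => exact absurd hbz (by simp [LE.le, le])
    | an k => exact absurd hbz (by simp [LE.le, le])
  by_cases han : ∃ m, an m ∈ D
  · obtain ⟨m, hm⟩ := han
    refine ⟨an m, fun x hx => ?_, fun u hu => hu hm⟩
    obtain ⟨z, hz, hxz, hmz⟩ := hdir x hx (an m) hm
    cases z with
    | an k =>
      have : m = k := hmz
      subst this; exact hxz
    | beta => exact absurd hz hb
    | nat n => exact absurd hmz (by simp [LE.le, le])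
    | omega => exact absurd hmz (by simp [LE.le, le])
    | a => exact absurd hmz (by simp [LE.le, le])
  by_cases haa : a ∈ D
  · refine ⟨a, fun x hx => ?_, fun u hu => hu haa⟩
    obtain ⟨z, hz, hxz, haz⟩ := hdir x hx a haa
    cases z with
    | a => exact hxz
    | beta => exact absurd hz hb
    | an k => exact absurd hz (fun h => han ⟨k, h⟩)
    | nat n => exact absurd haz (by simp [LE.le, le])
    | omega => exact absurd haz (by simp [LE.le, le])
  -- now D ⊆ nats ∪ {omega}
  have hsub : ∀ x ∈ D, (∃ n, x = nat n) ∨ x = omega := by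
    intro x hx
    cases x with
    | nat n => exact Or.inl ⟨n, rfl⟩
    | omega => exact Or.inr rfl
    | beta => exact absurd hx hb
    | an k => exact absurd hx (fun h => han ⟨k, h⟩)
    | a => exact absurd hx haa
  by_cases ho : omega ∈ D
  · refine ⟨omega, fun x hx => ?_, fun u hu => hu ho⟩
    rcases hsub x hx with ⟨n, rfl⟩ | rfl
    · trivial
    · trivial
  -- D ⊆ nats
  have hsub' : ∀ x ∈ D, ∃ n, x = nat n := by
    intro x hx
    rcases hsub x hx with h | rfl
    · exact h
    · exact absurd hx ho
  set N : Set ℕ := {n | nat n ∈ D} with hN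
  obtain ⟨x0, hx0⟩ := hne
  obtain ⟨n0, rfl⟩ := hsub' x0 hx0
  have hNne : N.Nonempty := ⟨n0, hx0⟩
  by_cases hbdd : BddAbove N
  · have hmem : sSup N ∈ N := Nat.sSup_mem hNne hbdd
    refine ⟨nat (sSup N), fun x hx => ?_, fun u hu => hu hmem⟩
    obtain ⟨n, rfl⟩ := hsub' x hx
    exact le_csSup hbdd (hx : n ∈ N)
  · refine ⟨omega, fun x hx => ?_, fun u hu => ?_⟩
    · obtain ⟨n, rfl⟩ := hsub' x hx; trivial
    · have hub : ∀ n ∈ N, nat n ≤ u := fun n hn => hu hn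
      cases u with
      | omega => trivial
      | beta => trivial
      | nat k =>
        exact absurd ⟨k, fun n hn => hub n hn⟩ hbdd
      | an k =>
        exact absurd ⟨k, fun n hn => hub n hn⟩ hbdd
      | a => exact absurd (hub n0 hx0) (by simp [LE.le, le])

end Pel
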